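/- (Partial sum of Gauss series as terminating ₃F₂) For natural number n and complex a, b, c with c and 1+b not nonpositive integers: ∑_{k=0}^{n} (a)_k (b)_k / ((c)_k k!) = ((1+b)_n / n!) · ∑_{k=0}^{n} (−n)_k (b)_k (c−a)_k / ((1+b)_k (c)_k k!). -/

import Mathlib

/-!
Expand `(a)_j / (c)_j = ₂F₁(-j, c - a; c; 1)` by the Chu–Vandermonde identity, exchange the two
finite sums, and sum the inner series in `j` by the hockey-stick identity
`∑_{m ≤ M} (x)_m / m! = (x + 1)_M / M!`. The coefficient of the `k`-th term is then
`(b)_k (b + k + 1)_{n-k} / (n - k)!`, which is `(1 + b)_n (-n)_k / (n! (1 + b)_k)` because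
`(-n)_k / n! = (-1)^k / (n - k)!`.
-/

open Complex Finset

/-- Pochhammer symbol `(x)_k = x (x+1) ⋯ (x+k-1)`. -/
noncomputable def poch (x : ℂ) (k : ℕ) : ℂ := ∏ i ∈ Finset.range k, (x + i)

/-- Beta function `B(x,y) = Γ(x) Γ(y) / Γ(x+y)`. -/
noncomputable def cBeta (x y : ℂ) : ℂ :=
  Complex.Gamma x * Complex.Gamma y / Complex.Gamma (x + y)

open Nat

section Pochhammer

open Polynomial

theorem descPochhammer_eval_add {R : Type*} [CommRing R] (r s : R) (k : ℕ) :
    (descPochhammer R k).eval (r + s) = ∑ ij ∈ antidiagonal k,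
      k.choose ij.1 * ((descPochhammer R ij.1).eval r * (descPochhammer R ij.2).eval s) := by
  have h (m : ℕ) (x : R) : (descPochhammer R m).eval x = (descPochhammer ℤ m).smeval x := by
    rw [← descPochhammer_map (algebraMap ℤ R), eval_map_algebraMap, aeval_eq_smeval]
  simp only [h]
  exact Ring.descPochhammer_smeval_add k (Commute.all r s)

theorem poch_eq_ascPochhammer_eval (x : ℂ) (k : ℕ) : poch x k = (ascPochhammer ℂ k).eval x := by
  induction k with
  | zero => simp [poch]
  | succ k ih => rw [poch, prod_range_succ, ← poch, ih, ascPochhammer_succ_eval]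

theorem poch_eq_descPochhammer_eval (x : ℂ) (k : ℕ) :
    poch x k = (descPochhammer ℂ k).eval (x + k - 1) := by
  rw [descPochhammer_eval_eq_ascPochhammer, poch_eq_ascPochhammer_eval]
  ring_nf

theorem descPochhammer_eval_eq_neg_one_pow_mul_poch (x : ℂ) (k : ℕ) :
    (descPochhammer ℂ k).eval x = (-1) ^ k * poch (-x) k := by
  rw [poch_eq_ascPochhammer_eval, ascPochhammer_eval_neg_eq_descPochhammer, ← mul_assoc,
    ← mul_pow, neg_one_mul, neg_neg, one_pow, one_mul]

theorem poch_neg_natCast (n k : ℕ) : poch (-n) k = (-1) ^ k * n.descFactorial k := by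
  rw [poch_eq_ascPochhammer_eval, ascPochhammer_eval_neg_eq_descPochhammer,
    descPochhammer_eval_eq_descFactorial]

end Pochhammer

theorem poch_one (x : ℂ) : poch x 1 = x := by simp [poch]

theorem poch_add (x : ℂ) (k m : ℕ) : poch x (k + m) = poch x k * poch (x + k) m := by
  simp only [poch, prod_range_add, Nat.cast_add, add_assoc]

theorem poch_ne_zero {x : ℂ} (hx : ∀ i : ℕ, x ≠ -i) (k : ℕ) : poch x k ≠ 0 :=
  prod_ne_zero_iff.2 fun i _ h => hx i (eq_neg_of_add_eq_zero_left h)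

theorem poch_div_poch_of_le {x : ℂ} {k n : ℕ} (hx : poch x k ≠ 0) (hkn : k ≤ n) :
    poch x n / poch x k = poch (x + k) (n - k) := by
  rw [div_eq_iff hx, ← Nat.add_sub_cancel' hkn, poch_add, Nat.add_sub_cancel_left, mul_comm]

theorem poch_neg_natCast_div_factorial {n k : ℕ} (hkn : k ≤ n) :
    poch (-n) k / n ! = (-1) ^ k / (n - k)! := by
  rw [poch_neg_natCast, ← Nat.factorial_mul_descFactorial hkn, cast_mul]
  have : (n.descFactorial k : ℂ) ≠ 0 := by
    exact_mod_cast (Nat.descFactorial_pos.2 hkn).ne'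
  field_simp

/-- Chu–Vandermonde, from the falling-factorial Vandermonde identity at
`a + j - 1 = (a - c) + (c + j - 1)`. -/
theorem poch_eq_sum_choose_mul_poch_mul_poch (a c : ℂ) (j : ℕ) :
    poch a j = ∑ k ∈ range (j + 1),
      (-1) ^ k * j.choose k * poch (c - a) k * poch (c + k) (j - k) := by
  rw [poch_eq_descPochhammer_eval, show a + j - 1 = (a - c) + (c + j - 1) by ring,
    descPochhammer_eval_add, Nat.sum_antidiagonal_eq_sum_range_succ fun p q =>
      (j.choose p : ℂ) * ((descPochhammer ℂ p).eval (a - c) * (descPochhammer ℂ q).eval (c + j - 1))]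
  refine sum_congr rfl fun k hk => ?_
  have hkj : k ≤ j := Nat.lt_succ_iff.1 (mem_range.1 hk)
  rw [poch_eq_descPochhammer_eval (c + k), descPochhammer_eval_eq_neg_one_pow_mul_poch, neg_sub,
    Nat.cast_sub hkj, show c + k + (j - k : ℂ) - 1 = c + j - 1 by ring]
  ring

theorem poch_div_poch_eq_sum_choose {c : ℂ} (hc : ∀ k, poch c k ≠ 0) (a : ℂ) (j : ℕ) :
    poch a j / poch c j =
      ∑ k ∈ range (j + 1), (-1) ^ k * j.choose k * poch (c - a) k / poch c k := by
  rw [poch_eq_sum_choose_mul_poch_mul_poch a c, sum_div]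
  refine sum_congr rfl fun k hk => ?_
  rw [← poch_div_poch_of_le (hc k) (Nat.lt_succ_iff.1 (mem_range.1 hk))]
  field_simp [hc j, hc k]

theorem poch_mul_poch_div_eq_sum {c : ℂ} (hc : ∀ k, poch c k ≠ 0) (a b : ℂ) (j : ℕ) :
    poch a j * poch b j / (poch c j * j !) = ∑ k ∈ range (j + 1),
      (-1) ^ k * poch (c - a) k / (poch c k * k !) * (poch b j / (j - k)!) := by
  rw [mul_div_mul_comm, poch_div_poch_eq_sum_choose hc, sum_mul]
  refine sum_congr rfl fun k hk => ?_
  rw [cast_choose ℂ (Nat.lt_succ_iff.1 (mem_range.1 hk))]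
  field_simp [hc k, (Nat.cast_ne_zero.2 (factorial_ne_zero j) : (j ! : ℂ) ≠ 0)]

theorem sum_range_poch_div_factorial (x : ℂ) (M : ℕ) :
    ∑ m ∈ range (M + 1), poch x m / m ! = poch (x + 1) M / M ! := by
  induction M with
  | zero => simp [poch]
  | succ M ih =>
    have hx : poch x (M + 1) = x * poch (x + 1) M := by rw [add_comm M, poch_add, poch_one, cast_one]
    rw [sum_range_succ, ih, hx, poch_add, poch_one, factorial_succ, cast_mul, cast_succ]
    field_simp
    ring

theorem sum_Ico_poch_div_factorial {k n : ℕ} (hkn : k ≤ n) (b : ℂ) :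
    ∑ j ∈ Ico k (n + 1), poch b j / (j - k)! =
      poch b k * (poch (b + k + 1) (n - k) / (n - k)!) := by
  rw [sum_Ico_eq_sum_range, Nat.sub_add_comm hkn, ← sum_range_poch_div_factorial, mul_sum]
  simp only [poch_add, Nat.add_sub_cancel_left, mul_div_assoc]

theorem partial_sum_gauss_as_3F2 (n : ℕ) (a b c : ℂ)
    (hc : ∀ k : ℕ, c ≠ -(k : ℂ)) (hb : ∀ k : ℕ, 1 + b ≠ -(k : ℂ)) :
    ∑ k ∈ Finset.range (n + 1), poch a k * poch b k / (poch c k * (Nat.factorial k : ℂ)) =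
      (poch (1 + b) n / (Nat.factorial n : ℂ)) *
        ∑ k ∈ Finset.range (n + 1),
          poch (-(n : ℂ)) k * poch b k * poch (c - a) k /
            (poch (1 + b) k * poch c k * (Nat.factorial k : ℂ)) := by
  have hc' := poch_ne_zero hc
  have hb' := poch_ne_zero hb
  set t : ℕ → ℂ := fun k => (-1) ^ k * poch (c - a) k / (poch c k * k !) with ht
  calc _ = ∑ j ∈ range (n + 1), ∑ k ∈ range (j + 1), t k * (poch b j / (j - k)!) :=
        sum_congr rfl fun j _ => poch_mul_poch_div_eq_sum hc' a b j
    _ = ∑ k ∈ range (n + 1), t k * ∑ j ∈ Ico k (n + 1), poch b j / (j - k)! := by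
        simp only [range_eq_Ico, mul_sum]
        exact (sum_Ico_Ico_comm 0 (n + 1) fun k j => t k * (poch b j / (j - k)!)).symm
    _ = ∑ k ∈ range (n + 1), t k * (poch b k * (poch (b + k + 1) (n - k) / (n - k)!)) :=
        sum_congr rfl fun k hk => by
          rw [sum_Ico_poch_div_factorial (Nat.lt_succ_iff.1 (mem_range.1 hk))]
    _ = _ := by
        rw [mul_sum]
        refine sum_congr rfl fun k hk => ?_
        have hkn := Nat.lt_succ_iff.1 (mem_range.1 hk)
        rw [show b + k + 1 = 1 + b + k by ring, ← poch_div_poch_of_le (hb' k) hkn, ht]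
        linear_combination -(poch (1 + b) n / poch (1 + b) k) *
          (poch b k * poch (c - a) k / (poch c k * k !)) * poch_neg_natCast_div_factorial hkn
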